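/- Assume τ = 0. Then for every Λ ∈ S_{n,δ}, θ̄(Λ) is defined and θ̄(Λ) = θ_0(Λ). -/

import Mathlib

namespace PanUnitary

/-- `part μ i` : the `i`-th largest element (0-indexed) of the multiset `μ`, `0` beyond.
Viewing a multiset of naturals as a partition (identified up to trailing zeros),
this is the `(i+1)`-st part. -/
def part (μ : Multiset ℕ) (i : ℕ) : ℕ := ((μ.sort (· ≤ ·)).reverse).getD i 0

/-- Remove the zero parts: the canonical (zero-free) representative of a partition. -/
def strip (μ : Multiset ℕ) : Multiset ℕ := μ.filter (fun x => 0 < x)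

/-- `transpose μ j` is the `(j+1)`-st part of the transposed (conjugate) partition. -/
def transpose (μ : Multiset ℕ) (j : ℕ) : ℕ := (μ.filter (fun x => j < x)).card

/-- `Preceq f g` : the partition whose parts are given by `f` is `⪯` the one given by `g`,
i.e. `g i - 1 ≤ f i ≤ g i` for all `i`. -/
def Preceq (f g : ℕ → ℕ) : Prop := ∀ i, g i ≤ f i + 1 ∧ f i ≤ g i

/-- An integer `δ` is admissible if it is even and nonnegative, or odd and negative. -/
def IsAdmissible (δ : ℤ) : Prop := (Even δ ∧ 0 ≤ δ) ∨ (Odd δ ∧ δ < 0)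

/-- `ε = 1` if `δ` is even, `ε = 0` if `δ` is odd. -/
def eps (δ : ℤ) : ℕ := if Even δ then 1 else 0

/-- `d (d + 1) / 2` where `d = |δ|`. -/
def halfTri (δ : ℤ) : ℕ := δ.natAbs * (δ.natAbs + 1) / 2

/-- A symbol: a pair of rows of natural numbers (the strict-decrease condition is
part of the predicate `Symbol.IsUnitary`). -/
structure Symbol where
  A : List ℕ
  B : List ℕ

def Symbol.defect (Λ : Symbol) : ℤ := (Λ.A.length : ℤ) - (Λ.B.length : ℤ)

/-- The row `(a_1, …, a_m)` gives the partition with parts `(a_i - e)/2 - (m - i)`. -/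
def upsRow (L : List ℕ) (e : ℕ) : Multiset ℕ :=
  ((L.mapIdx fun i a => (a - e) / 2 - (L.length - 1 - i) : List ℕ) : Multiset ℕ)

/-- The bipartition `Υ(Λ)` (canonical zero-free representatives). -/
def Symbol.Upsilon (Λ : Symbol) : Multiset ℕ × Multiset ℕ :=
  (strip (upsRow Λ.A (eps Λ.defect)), strip (upsRow Λ.B (1 - eps Λ.defect)))

/-- `Λ` is a unitary-type symbol of (admissible) defect `δ`. -/
def Symbol.IsUnitary (Λ : Symbol) (δ : ℤ) : Prop :=
  Λ.A.Pairwise (· > ·) ∧ Λ.B.Pairwise (· > ·) ∧ Λ.defect = δ ∧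
    (∀ a ∈ Λ.A, a % 2 = eps δ) ∧ (∀ b ∈ Λ.B, b % 2 = 1 - eps δ)

/-- The rank `2(|μ| + |ν|) + d(d+1)/2` of a unitary-type symbol. -/
def Symbol.rank (Λ : Symbol) : ℕ :=
  2 * (Λ.Upsilon.1.sum + Λ.Upsilon.2.sum) + halfTri Λ.defect

/-- Equivalence of symbols: same defect and same `Υ`. -/
def Symbol.Equiv (Λ Λ' : Symbol) : Prop :=
  Λ.defect = Λ'.defect ∧ Λ.Upsilon = Λ'.Upsilon

/-- Membership in `S_{n,δ}`: a unitary-type symbol of admissible defect `δ` and rank `n`. -/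
def InS (n : ℕ) (δ : ℤ) (Λ : Symbol) : Prop :=
  IsAdmissible δ ∧ Λ.IsUnitary δ ∧ Λ.rank = n

/-- `Σ min(x,y)` over all unordered pairs of (positions of) entries of the list. -/
def pairMinSum : List ℕ → ℕ
  | [] => 0
  | x :: xs => (xs.map (fun y => min x y)).sum + pairMinSum xs

/-- All entries of a symbol (both rows). -/
def Symbol.entries (Λ : Symbol) : List ℕ := Λ.A ++ Λ.B

/-- `ord(Λ) = Σ min(x,y) − Σ_{i=1}^{⌊N/2⌋} (N − 2i)²`. -/
def Symbol.ord (Λ : Symbol) : ℤ :=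
  (pairMinSum Λ.entries : ℤ) -
    ∑ i ∈ Finset.Icc 1 (Λ.entries.length / 2),
      ((Λ.entries.length : ℤ) - 2 * (i : ℤ)) ^ 2

/-- The shift of a unitary-type symbol. -/
def Symbol.shift (Λ : Symbol) : Symbol :=
  ⟨Λ.A.map (fun a => a + 2) ++ [eps Λ.defect],
   Λ.B.map (fun b => b + 2) ++ [1 - eps Λ.defect]⟩

/-- The defect `δ'` for the second member of the dual pair. -/
def deltaPrime (n n' : ℕ) (δ : ℤ) : ℤ :=
  if Even (n + n') then (if δ = 0 then 0 else -δ + 1) else -δ - 1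

/-- `τ = ((n' − d'(d'+1)/2) − (n − d(d+1)/2)) / 2`. -/
def tau (n n' : ℕ) (δ : ℤ) : ℚ :=
  (((n' : ℚ) - (halfTri (deltaPrime n n' δ) : ℚ)) - ((n : ℚ) - (halfTri δ : ℚ))) / 2

/-- `τ` as a natural number (equal to `τ` whenever `τ` is a nonnegative integer). -/
def tauNat (n n' : ℕ) (δ : ℤ) : ℕ :=
  ((n' + halfTri δ) - (n + halfTri (deltaPrime n n' δ))) / 2

/-- The set of (canonical, zero-free) bipartitions `(μ;ν)` with
`2(|μ|+|ν|) + d(d+1)/2 = n`; equivalently `|μ|+|ν| = (n − d(d+1)/2)/2`. -/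
def BipSet (n : ℕ) (δ : ℤ) : Set (Multiset ℕ × Multiset ℕ) :=
  {p | (∀ x ∈ p.1, 0 < x) ∧ (∀ x ∈ p.2, 0 < x) ∧ 2 * (p.1.sum + p.2.sum) + halfTri δ = n}

/-- The `⪯`-conditions (on transposes) defining the relation `Θ`, at the level of
bipartitions `p = Υ(Λ)`, `q = Υ(Λ')`. -/
def PrecCond (n n' : ℕ) (p q : Multiset ℕ × Multiset ℕ) : Prop :=
  if Even (n + n') then
    Preceq (transpose p.2) (transpose q.1) ∧ Preceq (transpose q.2) (transpose p.1)
  else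
    Preceq (transpose p.1) (transpose q.2) ∧ Preceq (transpose q.1) (transpose p.2)

/-- `Θ` at the level of bipartitions (classes of symbols). -/
def ThetaB (n n' : ℕ) (δ : ℤ) (p q : Multiset ℕ × Multiset ℕ) : Prop :=
  q ∈ BipSet n' (deltaPrime n n' δ) ∧ PrecCond n n' p q

/-- `Λ' ∈ Θ(Λ)` for symbols, where `Λ ∈ S_{n,δ}`. -/
def InTheta (n n' : ℕ) (δ : ℤ) (Λ Λ' : Symbol) : Prop :=
  InS n' (deltaPrime n n' δ) Λ' ∧ PrecCond n n' Λ.Upsilon Λ'.Upsilon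

/-- `Λ' ∈ Θ(Λ)_k`. -/
def InThetaK (n n' : ℕ) (δ : ℤ) (k : ℕ) (Λ Λ' : Symbol) : Prop :=
  InTheta n n' δ Λ Λ' ∧
    (if Even (n + n') then (Λ'.Upsilon.2.sum : ℤ) = (Λ.Upsilon.1.sum : ℤ) - (k : ℤ)
     else (Λ'.Upsilon.1.sum : ℤ) = (Λ.Upsilon.2.sum : ℤ) - (k : ℤ))

/-- Remove (one copy of) the largest part. -/
def mtail (μ : Multiset ℕ) : Multiset ℕ := μ.erase (part μ 0)

/-- `θ_k` at the level of bipartitions: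
even case: `(μ;ν) ↦ (sort(ν, τ+k); sort(μ_2, …, μ_{m_1}, μ_1 − k))`;
odd case: `(μ;ν) ↦ (sort(ν_2, …, ν_{m_2}, ν_1 − k); sort(μ, τ+k))`. -/
def thetaBip (n n' : ℕ) (δ : ℤ) (k : ℕ) (p : Multiset ℕ × Multiset ℕ) :
    Multiset ℕ × Multiset ℕ :=
  if Even (n + n') then
    (strip ((tauNat n n' δ + k) ::ₘ p.2), strip ((part p.1 0 - k) ::ₘ mtail p.1))
  else
    (strip ((part p.2 0 - k) ::ₘ mtail p.2), strip ((tauNat n n' δ + k) ::ₘ p.1))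

/-- The unitary-type symbol of defect `δ` with `Υ = p`, whose first row has `m1`
entries and second row `m2` entries (valid whenever `m1, m2` are large enough). -/
def symbolOfBip (δ : ℤ) (p : Multiset ℕ × Multiset ℕ) (m1 m2 : ℕ) : Symbol :=
  ⟨List.ofFn (fun i : Fin m1 => 2 * (part p.1 (i : ℕ) + (m1 - 1 - (i : ℕ))) + eps δ),
   List.ofFn (fun j : Fin m2 => 2 * (part p.2 (j : ℕ) + (m2 - 1 - (j : ℕ))) + (1 - eps δ))⟩

/-- A canonical representative symbol of defect `δ` with `Υ = p`. -/
def canonicalSymbol (δ : ℤ) (p : Multiset ℕ × Multiset ℕ) : Symbol :=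
  symbolOfBip δ p (max p.1.card ((p.2.card : ℤ) + δ).toNat)
    (((max p.1.card ((p.2.card : ℤ) + δ).toNat : ℤ) - δ).toNat)

/-- A symbol representing the class `θ_k(Λ)`. -/
def thetaSymbol (n n' : ℕ) (δ : ℤ) (k : ℕ) (Λ : Symbol) : Symbol :=
  canonicalSymbol (deltaPrime n n' δ) (thetaBip n n' δ k Λ.Upsilon)

/-- `K(Λ)`: `μ_1` in the even case, `ν_1` in the odd case. -/
def bigK (n n' : ℕ) (Λ : Symbol) : ℕ :=
  if Even (n + n') then part Λ.Upsilon.1 0 else part Λ.Upsilon.2 0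

/-- `ord` at the level of bipartitions (well defined on classes). -/
def ordB (δ : ℤ) (p : Multiset ℕ × Multiset ℕ) : ℤ := (canonicalSymbol δ p).ord

/-- Strict lexicographic order on partitions. -/
def PartLexLt (μ ν : Multiset ℕ) : Prop :=
  ∃ i, (∀ j < i, part μ j = part ν j) ∧ part μ i < part ν i

/-- The total order on `S_{n,δ}` (and on `S_{n',δ'}`), at the level of bipartitions;
it depends only on the parity of `n + n'`. -/
def BLt (n n' : ℕ) (p q : Multiset ℕ × Multiset ℕ) : Prop :=
  if Even (n + n') then
    p.1.sum < q.1.sum ∨ (p.1.sum = q.1.sum ∧ PartLexLt p.1 q.1) ∨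
      (p.1 = q.1 ∧ PartLexLt p.2 q.2)
  else
    p.2.sum < q.2.sum ∨ (p.2.sum = q.2.sum ∧ PartLexLt p.2 q.2) ∨
      (p.2 = q.2 ∧ PartLexLt p.1 q.1)

/-- `q ∈ Θ♭(p)` relative to a given partial function `bar` (playing the role of `θ̄`). -/
def InFlat (n n' : ℕ) (δ : ℤ)
    (bar : Multiset ℕ × Multiset ℕ → Option (Multiset ℕ × Multiset ℕ))
    (p q : Multiset ℕ × Multiset ℕ) : Prop :=
  ThetaB n n' δ p q ∧ ∀ r ∈ BipSet n δ, BLt n n' r p → bar r ≠ some q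

/-- `bar` is the partial function `θ̄` defined by recursion along the total order:
on each `p ∈ S_{n,δ}`, if `Θ♭(p) ≠ ∅` then `bar p` is defined and is the smallest
element (w.r.t. the total order) of maximal `ord` in `Θ♭(p)`. -/
def IsThetaBar (n n' : ℕ) (δ : ℤ)
    (bar : Multiset ℕ × Multiset ℕ → Option (Multiset ℕ × Multiset ℕ)) : Prop :=
  (∀ p, p ∉ BipSet n δ → bar p = none) ∧
  ∀ p ∈ BipSet n δ,
    ((∃ q, InFlat n n' δ bar p q) → ∃ q, bar p = some q) ∧
    ∀ q, bar p = some q →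
      InFlat n n' δ bar p q ∧
      (∀ r, InFlat n n' δ bar p r →
        ordB (deltaPrime n n' δ) r ≤ ordB (deltaPrime n n' δ) q) ∧
      (∀ r, InFlat n n' δ bar p r →
        ordB (deltaPrime n n' δ) r = ordB (deltaPrime n n' δ) q → r ≠ q → BLt n n' q r)

/-!
When `τ = 0`, `θ_0` is the swap `(μ;ν) ↦ (ν;μ)`, which always lies in `Θ`. In the even case the
condition `ν'ᵀ ⪯ μᵀ` gives `|ν'| ≤ |μ|` for every `(μ';ν') ∈ Θ(μ;ν)`, with equality only for the
swap itself, since the ranks agree. If `|ν'| < |μ|`, then `(ν';μ')` precedes `(μ;ν)` in the total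
order, and by induction along that order `θ̄(ν';μ') = (μ';ν')`, so `(μ';ν')` has been removed
from `Θ♭(μ;ν)`. Hence `Θ♭(μ;ν)` consists of the swap alone, whatever `ord` does; the odd case is
symmetric.
-/

lemma transpose_cons (a : ℕ) (s : Multiset ℕ) (j : ℕ) :
    transpose (a ::ₘ s) j = (if j < a then 1 else 0) + transpose s j := by
  simp only [transpose, Multiset.filter_cons]
  split <;> simp [Nat.add_comm]

lemma sum_range_ite_lt (a N : ℕ) :
    ∑ j ∈ Finset.range N, (if j < a then 1 else 0) = min a N := by
  induction N with
  | zero => simp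
  | succ N ih => rw [Finset.sum_range_succ, ih]; split <;> omega

lemma sum_range_transpose {μ : Multiset ℕ} {N : ℕ} (h : ∀ x ∈ μ, x ≤ N) :
    ∑ j ∈ Finset.range N, transpose μ j = μ.sum := by
  induction μ using Multiset.induction with
  | empty => simp [transpose]
  | cons a s ih =>
    have ha : a ≤ N := h a (Multiset.mem_cons_self a s)
    simp only [transpose_cons, Finset.sum_add_distrib, sum_range_ite_lt, Multiset.sum_cons]
    rw [ih fun x hx => h x (Multiset.mem_cons_of_mem hx)]
    omega

lemma transpose_eq_count_add (μ : Multiset ℕ) (y : ℕ) :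
    transpose μ y = μ.count (y + 1) + transpose μ (y + 1) := by
  induction μ using Multiset.induction with
  | empty => simp [transpose]
  | cons a s ih =>
    rw [transpose_cons, transpose_cons, Multiset.count_cons]
    split_ifs <;> omega

lemma sum_le_sum_of_transpose_le {α β : Multiset ℕ} (h : ∀ j, transpose α j ≤ transpose β j) :
    α.sum ≤ β.sum := by
  set N := α.sum + β.sum
  have hα : ∀ x ∈ α, x ≤ N := fun x hx => (Multiset.le_sum_of_mem hx).trans le_self_add
  have hβ : ∀ x ∈ β, x ≤ N := fun x hx => (Multiset.le_sum_of_mem hx).trans le_add_self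
  rw [← sum_range_transpose hα, ← sum_range_transpose hβ]
  exact Finset.sum_le_sum fun j _ => h j

lemma transpose_eq_of_transpose_le_of_sum_eq {α β : Multiset ℕ}
    (h : ∀ j, transpose α j ≤ transpose β j) (hs : α.sum = β.sum) (j : ℕ) :
    transpose α j = transpose β j := by
  by_contra hne
  set N := α.sum + β.sum + j + 1
  have hα : ∀ x ∈ α, x ≤ N := fun x hx => by have := Multiset.le_sum_of_mem hx; omega
  have hβ : ∀ x ∈ β, x ≤ N := fun x hx => by have := Multiset.le_sum_of_mem hx; omega
  have hlt : ∑ i ∈ Finset.range N, transpose α i < ∑ i ∈ Finset.range N, transpose β i :=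
    Finset.sum_lt_sum (fun i _ => h i)
      ⟨j, Finset.mem_range.2 (by omega), lt_of_le_of_ne (h j) hne⟩
  rw [sum_range_transpose hα, sum_range_transpose hβ] at hlt
  omega

lemma eq_of_transpose_le_of_sum_eq {α β : Multiset ℕ} (hα : ∀ x ∈ α, 0 < x)
    (hβ : ∀ x ∈ β, 0 < x) (h : ∀ j, transpose α j ≤ transpose β j) (hs : α.sum = β.sum) :
    α = β := by
  have ht := transpose_eq_of_transpose_le_of_sum_eq h hs
  ext x
  cases x with
  | zero =>
    rw [Multiset.count_eq_zero.2 fun hm => (hα 0 hm).false,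
      Multiset.count_eq_zero.2 fun hm => (hβ 0 hm).false]
  | succ y =>
    have := transpose_eq_count_add α y
    have := transpose_eq_count_add β y
    have := ht y
    have := ht (y + 1)
    omega

/-- The exchange step of the induction: with `c = ν'`, `d = μ` in the even case (`c = μ'`,
`d = ν` in the odd case), either `|c| < |d|` or `Θ` returns the swap. -/
lemma sum_lt_or_eq_and_eq_of_transpose_le {a b c d : Multiset ℕ} (ha : ∀ x ∈ a, 0 < x)
    (hb : ∀ x ∈ b, 0 < x) (hc : ∀ x ∈ c, 0 < x) (hd : ∀ x ∈ d, 0 < x)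
    (hab : ∀ j, transpose a j ≤ transpose b j) (hcd : ∀ j, transpose c j ≤ transpose d j)
    (hs : c.sum + b.sum = d.sum + a.sum) :
    c.sum < d.sum ∨ c = d ∧ a = b := by
  have hcd_sum := sum_le_sum_of_transpose_le hcd
  have hab_sum := sum_le_sum_of_transpose_le hab
  refine (lt_or_eq_of_le hcd_sum).imp_right fun h => ⟨?_, ?_⟩
  · exact eq_of_transpose_le_of_sum_eq hc hd hcd h
  · exact eq_of_transpose_le_of_sum_eq ha hb hab (by omega)

lemma bipSet_subset_range (n : ℕ) (δ : ℤ) :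
    BipSet n δ ⊆ Set.range fun x : (Σ a : Fin (n + 1), Nat.Partition a) ×
      (Σ b : Fin (n + 1), Nat.Partition b) => (x.1.2.parts, x.2.2.parts) := by
  rintro ⟨μ, ν⟩ ⟨hμ, hν, hn⟩
  dsimp only at hn
  exact ⟨(⟨⟨μ.sum, by omega⟩, ⟨μ, hμ _, rfl⟩⟩, ⟨⟨ν.sum, by omega⟩, ⟨ν, hν _, rfl⟩⟩), rfl⟩

lemma bipSet_finite (n : ℕ) (δ : ℤ) : (BipSet n δ).Finite :=
  (Set.finite_range _).subset (bipSet_subset_range n δ)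

/-- `BLt` compares `(|μ|, μ, ν)` (even case) or `(|ν|, ν, μ)` (odd case) lexicographically. -/
def lexKey (μ ν : Multiset ℕ) : ℕ ×ₗ Lex (ℕ → ℕ) ×ₗ Lex (ℕ → ℕ) :=
  toLex (μ.sum, toLex (toLex (part μ), toLex (part ν)))

def bltKey (n n' : ℕ) (p : Multiset ℕ × Multiset ℕ) : ℕ ×ₗ Lex (ℕ → ℕ) ×ₗ Lex (ℕ → ℕ) :=
  if Even (n + n') then lexKey p.1 p.2 else lexKey p.2 p.1

lemma lexKey_lt_lexKey {μ ν μ' ν' : Multiset ℕ}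
    (h : μ.sum < μ'.sum ∨ (μ.sum = μ'.sum ∧ PartLexLt μ μ') ∨ (μ = μ' ∧ PartLexLt ν ν')) :
    lexKey μ ν < lexKey μ' ν' := by
  simp only [lexKey, Prod.Lex.toLex_lt_toLex]
  -- `PartLexLt μ μ'` unfolds to `toLex (part μ) < toLex (part μ')` in `Pi.Lex`.
  rcases h with h | ⟨hs, h⟩ | ⟨rfl, h⟩
  · exact Or.inl h
  · exact Or.inr ⟨hs, Or.inl h⟩
  · exact Or.inr ⟨rfl, Or.inr ⟨rfl, h⟩⟩

lemma BLt.bltKey_lt {n n' : ℕ} {p q : Multiset ℕ × Multiset ℕ} (h : BLt n n' p q) :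
    bltKey n n' p < bltKey n n' q := by
  unfold BLt at h
  unfold bltKey
  split_ifs at h ⊢ <;> exact lexKey_lt_lexKey h

lemma BLt.irrefl {n n' : ℕ} (p : Multiset ℕ × Multiset ℕ) : ¬ BLt n n' p p :=
  fun h => lt_irrefl _ h.bltKey_lt

lemma bipSet_wellFoundedOn_bLt (n n' : ℕ) (δ : ℤ) : (BipSet n δ).WellFoundedOn (BLt n n') := by
  have : (BipSet n δ).WellFoundedOn (Function.onFun (· < ·) (bltKey n n')) :=
    Set.wellFoundedOn_image.1 ((bipSet_finite n δ).image _).wellFoundedOn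
  exact this.mono' fun _ _ _ _ h => h.bltKey_lt

lemma add_halfTri_eq_of_tau_eq_zero {n n' : ℕ} {δ : ℤ} (hτ : tau n n' δ = 0) :
    n' + halfTri δ = n + halfTri (deltaPrime n n' δ) := by
  rw [tau] at hτ
  have : ((n' + halfTri δ : ℕ) : ℚ) = (n + halfTri (deltaPrime n n' δ) : ℕ) := by
    push_cast
    linarith
  exact_mod_cast this

lemma tauNat_eq_zero_of_tau_eq_zero {n n' : ℕ} {δ : ℤ} (hτ : tau n n' δ = 0) :
    tauNat n n' δ = 0 := by
  have := add_halfTri_eq_of_tau_eq_zero hτ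
  rw [tauNat]
  omega

lemma swap_mem_bipSet_iff {n n' : ℕ} {δ : ℤ} (hτ : tau n n' δ = 0)
    {p : Multiset ℕ × Multiset ℕ} : p.swap ∈ BipSet n' (deltaPrime n n' δ) ↔ p ∈ BipSet n δ := by
  have := add_halfTri_eq_of_tau_eq_zero hτ
  simp only [BipSet, Set.mem_ofPred_eq, Prod.fst_swap, Prod.snd_swap]
  constructor <;> rintro ⟨h1, h2, h3⟩ <;> exact ⟨h2, h1, by omega⟩

lemma part_mem {μ : Multiset ℕ} {j : ℕ} (h : j < Multiset.card μ) : part μ j ∈ μ := by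
  unfold part
  rw [List.getD_eq_getElem _ _ (by simpa using h)]
  exact (Multiset.mem_sort _).1 (List.mem_reverse.1 (List.getElem_mem _))

lemma strip_of_forall_pos {μ : Multiset ℕ} (h : ∀ x ∈ μ, 0 < x) : strip μ = μ :=
  Multiset.filter_eq_self.2 h

lemma strip_zero_cons (μ : Multiset ℕ) : strip (0 ::ₘ μ) = strip μ :=
  Multiset.filter_cons_of_neg _ (lt_irrefl 0)

lemma strip_part_zero_cons_mtail {μ : Multiset ℕ} (h : ∀ x ∈ μ, 0 < x) :
    strip (part μ 0 ::ₘ mtail μ) = μ := by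
  rcases eq_or_ne μ 0 with rfl | h0
  · simp [part, mtail, strip]
  · rw [mtail, Multiset.cons_erase (part_mem (Multiset.card_pos.2 h0)), strip_of_forall_pos h]

lemma thetaBip_zero_eq_swap {n n' : ℕ} {δ : ℤ} (hτ : tau n n' δ = 0)
    {p : Multiset ℕ × Multiset ℕ} (hp : p ∈ BipSet n δ) : thetaBip n n' δ 0 p = p.swap := by
  obtain ⟨h1, h2, -⟩ := hp
  rw [thetaBip, tauNat_eq_zero_of_tau_eq_zero hτ]
  split
  · rw [Nat.add_zero, Nat.sub_zero, strip_zero_cons, strip_of_forall_pos h2,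
      strip_part_zero_cons_mtail h1]
    rfl
  · rw [Nat.add_zero, Nat.sub_zero, strip_zero_cons, strip_of_forall_pos h1,
      strip_part_zero_cons_mtail h2]
    rfl

lemma precCond_swap (n n' : ℕ) (p : Multiset ℕ × Multiset ℕ) : PrecCond n n' p p.swap := by
  have hrefl (f : ℕ → ℕ) : Preceq f f := fun _ => ⟨Nat.le_succ _, le_rfl⟩
  unfold PrecCond
  split <;> exact ⟨hrefl _, hrefl _⟩

lemma ThetaB.bLt_swap_or_eq_swap {n n' : ℕ} {δ : ℤ} (hτ : tau n n' δ = 0)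
    {p q : Multiset ℕ × Multiset ℕ} (hp : p ∈ BipSet n δ) (hq : ThetaB n n' δ p q) :
    BLt n n' q.swap p ∨ q = p.swap := by
  obtain ⟨⟨hq1, hq2, hqn⟩, hP⟩ := hq
  obtain ⟨hp1, hp2, hpn⟩ := hp
  have := add_halfTri_eq_of_tau_eq_zero hτ
  unfold PrecCond at hP
  unfold BLt
  split_ifs at hP ⊢
  · rcases sum_lt_or_eq_and_eq_of_transpose_le hp2 hq1 hq2 hp1 (fun j => (hP.1 j).2)
      (fun j => (hP.2 j).2) (by omega) with h | ⟨h2, h1⟩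
    · exact Or.inl (Or.inl h)
    · exact Or.inr (Prod.ext h1.symm h2)
  · rcases sum_lt_or_eq_and_eq_of_transpose_le hp1 hq2 hq1 hp2 (fun j => (hP.1 j).2)
      (fun j => (hP.2 j).2) (by omega) with h | ⟨h1, h2⟩
    · exact Or.inl (Or.inl h)
    · exact Or.inr (Prod.ext h1 h2.symm)

lemma IsThetaBar.eq_swap_of_forall_bLt {n n' : ℕ} {δ : ℤ} (hτ : tau n n' δ = 0)
    {bar : Multiset ℕ × Multiset ℕ → Option (Multiset ℕ × Multiset ℕ)}
    (hbar : IsThetaBar n n' δ bar) {p : Multiset ℕ × Multiset ℕ} (hp : p ∈ BipSet n δ)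
    (IH : ∀ r ∈ BipSet n δ, BLt n n' r p → bar r = some r.swap) :
    bar p = some p.swap := by
  have hswap : InFlat n n' δ bar p p.swap := by
    refine ⟨⟨(swap_mem_bipSet_iff hτ).2 hp, precCond_swap n n' p⟩, fun r hr hlt h => ?_⟩
    rw [IH r hr hlt, Option.some_inj, Prod.swap_inj] at h
    exact BLt.irrefl p (h ▸ hlt)
  obtain ⟨q, hq⟩ := (hbar.2 p hp).1 ⟨_, hswap⟩
  obtain ⟨⟨hqΘ, hq_flat⟩, -⟩ := (hbar.2 p hp).2 q hq
  rcases hqΘ.bLt_swap_or_eq_swap hτ hp with hlt | rfl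
  · have hmem : q.swap ∈ BipSet n δ := (swap_mem_bipSet_iff hτ).1 (by simpa using hqΘ.1)
    exact absurd (by simpa using IH _ hmem hlt) (hq_flat _ hmem hlt)
  · exact hq

theorem statement12_general (n n' : ℕ) (δ : ℤ) (hτ : tau n n' δ = 0) :
    ∀ bar : Multiset ℕ × Multiset ℕ → Option (Multiset ℕ × Multiset ℕ),
      IsThetaBar n n' δ bar → ∀ p ∈ BipSet n δ, bar p = some (thetaBip n n' δ 0 p) := by
  intro bar hbar p hp
  rw [thetaBip_zero_eq_swap hτ hp]
  exact (bipSet_wellFoundedOn_bLt n n' δ).induction hp fun r hr IH =>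
    hbar.eq_swap_of_forall_bLt hτ hr IH

/-- If `τ = 0` then `θ̄(Λ)` is defined and equals `θ_0(Λ)` for every `Λ ∈ S_{n,δ}`. -/
theorem statement12 (n n' : ℕ) (δ : ℤ) (hδ : IsAdmissible δ) (hτ : tau n n' δ = 0) :
    ∀ bar : Multiset ℕ × Multiset ℕ → Option (Multiset ℕ × Multiset ℕ),
      IsThetaBar n n' δ bar → ∀ p ∈ BipSet n δ, bar p = some (thetaBip n n' δ 0 p) :=
  statement12_general n n' δ hτ

end PanUnitary
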